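/- arXiv:1307.1318 — 11 statements merged into one kernel-verified Lean document; each statement's English description precedes it below -/
import Mathlib

section
/- Let F be a closure system on a set B. Then there exist a complete lattice L and a map μ : B → L such that the collection of all cuts of μ, namely {μ⁻¹(↑p) : p ∈ L}, is exactly F. (One may take L to be F ordered by reverse set-inclusion and μ(x) = ⋂{f ∈ F : x ∈ f}.) -/
/-- Proposition 1 (synth): every closure system on `B` is the collection of cuts
of some lattice valued function `μ : B → L`. -/
theorem stmt_2 {B : Type u} (F : Set (Set B))
    (huniv : Set.univ ∈ F) (hinter : ∀ S ⊆ F, ⋂₀ S ∈ F) :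
    ∃ (L : Type u) (_ : CompleteLattice L) (μ : B → L),
      {s : Set B | ∃ p : L, s = μ ⁻¹' Set.Ici p} = F := by
  classical
  letI instInf : InfSet F :=
    ⟨fun S => ⟨⋂₀ ((↑) '' S), hinter _ (by rintro _ ⟨t, _, rfl⟩; exact t.2)⟩⟩
  letI instCL : CompleteLattice F :=
    completeLatticeOfInf F (fun S =>
      ⟨fun t ht => Set.sInter_subset_of_mem ⟨t, ht, rfl⟩,
       fun b hb => Set.subset_sInter (by rintro _ ⟨t, ht, rfl⟩; exact hb ht)⟩)
  -- the closure of a point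
  have hclmem : ∀ x : B, ⋂₀ {f ∈ F | x ∈ f} ∈ F := fun x => hinter _ (fun s hs => hs.1)
  set μ : B → (↥F)ᵒᵈ := fun x => OrderDual.toDual ⟨⋂₀ {f ∈ F | x ∈ f}, hclmem x⟩ with hμ
  refine ⟨(↥F)ᵒᵈ, inferInstance, μ, ?_⟩
  have hcut : ∀ p : (↥F)ᵒᵈ, μ ⁻¹' Set.Ici p = ↑(OrderDual.ofDual p) := by
    intro p
    ext x
    constructor
    · intro hx
      have h : (⋂₀ {f ∈ F | x ∈ f}) ⊆ ↑(OrderDual.ofDual p) := hx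
      exact h (by intro s hs; exact hs.2)
    · intro hx
      have h : (⋂₀ {f ∈ F | x ∈ f}) ⊆ ↑(OrderDual.ofDual p) :=
        Set.sInter_subset_of_mem ⟨(OrderDual.ofDual p).2, hx⟩
      exact h
  ext s
  simp only [Set.mem_setOf_eq]
  constructor
  · rintro ⟨p, rfl⟩
    rw [hcut p]
    exact (OrderDual.ofDual p).2
  · intro hs
    exact ⟨OrderDual.toDual ⟨s, hs⟩, by simpa using (hcut (OrderDual.toDual ⟨s, hs⟩)).symm⟩
end

section
/- Let B be a set, L a complete lattice, and μ : B → L a map. Define c : L → L by c(p) = ⋁{q ∈ L : μ⁻¹(↑q) = μ⁻¹(↑p)} (the supremum of the ≈-class of p). Then c(p) belongs to the class of p, i.e., μ⁻¹(↑(c(p))) = μ⁻¹(↑p), and c is a closure operator on L: p ≤ c(p), c(c(p)) = c(p), and p ≤ q implies c(p) ≤ c(q). -/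
/-- `p ↦ ⋁ [p]_≈` lands in the class of `p` and is a closure operator on `L`. -/
theorem stmt_6 {B L : Type*} [CompleteLattice L] (μ : B → L)
    (c : L → L)
    (hc : ∀ p : L, c p = sSup {q : L | μ ⁻¹' Set.Ici q = μ ⁻¹' Set.Ici p}) :
    (∀ p : L, μ ⁻¹' Set.Ici (c p) = μ ⁻¹' Set.Ici p) ∧
    (∀ p : L, p ≤ c p) ∧
    (∀ p : L, c (c p) = c p) ∧
    (∀ p q : L, p ≤ q → c p ≤ c q) := by
  have hcut : ∀ p : L, μ ⁻¹' Set.Ici (c p) = μ ⁻¹' Set.Ici p := by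
    intro p
    ext x
    simp only [Set.mem_preimage, Set.mem_Ici, hc p, sSup_le_iff, Set.mem_setOf_eq]
    constructor
    · intro h
      exact h p rfl
    · intro h q hq
      have : x ∈ μ ⁻¹' Set.Ici q := by
        rw [hq]; exact h
      exact this
  have hle : ∀ p : L, p ≤ c p := fun p => by
    rw [hc p]; exact le_sSup rfl
  refine ⟨hcut, hle, ?_, ?_⟩
  · intro p
    have : {q : L | μ ⁻¹' Set.Ici q = μ ⁻¹' Set.Ici (c p)}
        = {q : L | μ ⁻¹' Set.Ici q = μ ⁻¹' Set.Ici p} := by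
      rw [hcut p]
    rw [hc (c p), this, ← hc p]
  · intro p q hpq
    have hsup : μ ⁻¹' Set.Ici (c p ⊔ c q) = μ ⁻¹' Set.Ici q := by
      ext x
      simp only [Set.mem_preimage, Set.mem_Ici, sup_le_iff]
      constructor
      · intro h
        have : x ∈ μ ⁻¹' Set.Ici (c q) := h.2
        rw [hcut q] at this; exact this
      · intro h
        have hxq : x ∈ μ ⁻¹' Set.Ici (c q) := by rw [hcut q]; exact h
        have hxp : x ∈ μ ⁻¹' Set.Ici (c p) := by
          rw [hcut p]; exact le_trans hpq h
        exact ⟨hxp, hxq⟩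
    have : c p ⊔ c q ≤ c q := by
      conv_rhs => rw [hc q]
      exact le_sSup hsup
    exact le_trans le_sup_left this
end

section
/- Let B be a set, L a complete lattice, and μ : B → L a map. Define the canonical representation μ̂ : B → P(B) by μ̂(x) = ⋂{μ_p : p ∈ L, x ∈ μ_p}, where μ_p = μ⁻¹(↑p). Then for every p ∈ L, the set {x ∈ B : μ̂(x) ⊆ μ_p} equals μ_p; consequently the collection of cuts of μ̂ (taken with respect to the codomain μ_L = {μ_p : p ∈ L} ordered by reverse inclusion) coincides with the collection of cuts of μ. -/
/-- Proposition (izok): the cuts of the canonical representation `μ̂` coincide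
with the cuts of `μ`. -/
theorem stmt_8 {B L : Type*} [CompleteLattice L] (μ : B → L)
    (muhat : B → Set B)
    (h : ∀ x : B, muhat x = ⋂₀ {s : Set B | (∃ p : L, s = μ ⁻¹' Set.Ici p) ∧ x ∈ s}) :
    (∀ p : L, {x : B | muhat x ⊆ μ ⁻¹' Set.Ici p} = μ ⁻¹' Set.Ici p) ∧
    {F : Set B | ∃ f ∈ {s : Set B | ∃ p : L, s = μ ⁻¹' Set.Ici p},
        F = {x : B | muhat x ⊆ f}} =
      {s : Set B | ∃ p : L, s = μ ⁻¹' Set.Ici p} := by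
  have key : ∀ p : L, {x : B | muhat x ⊆ μ ⁻¹' Set.Ici p} = μ ⁻¹' Set.Ici p := by
    intro p
    ext x
    constructor
    · intro hx
      have hmem : x ∈ muhat x := by
        rw [h x]
        intro s hs
        exact hs.2
      exact hx hmem
    · intro hx y hy
      rw [h x] at hy
      exact hy _ ⟨⟨p, rfl⟩, hx⟩
  refine ⟨key, ?_⟩
  ext F
  constructor
  · rintro ⟨f, ⟨p, rfl⟩, rfl⟩
    exact ⟨p, key p⟩
  · rintro ⟨p, rfl⟩
    exact ⟨μ ⁻¹' Set.Ici p, ⟨p, rfl⟩, (key p).symm⟩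
end

section
/- Let B be a set, L a complete lattice, and μ : B → L a map. Define μ̂(x) = ⋂{μ_p : p ∈ L, x ∈ μ_p}, where μ_p = μ⁻¹(↑p). If a, b, c ∈ B satisfy μ(a) = μ(b) ∨ μ(c), then μ̂(a) = μ̂(b) ∩ μ̂(c) (that is, the analogous join equation holds for the canonical representation, the join in the cut lattice ordered by reverse inclusion being set intersection). -/
lemma muhat_eq {B L : Type*} [CompleteLattice L] (μ : B → L)
    (muhat : B → Set B)
    (h : ∀ x : B, muhat x = ⋂₀ {s : Set B | (∃ p : L, s = μ ⁻¹' Set.Ici p) ∧ x ∈ s})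
    (x : B) : muhat x = μ ⁻¹' Set.Ici (μ x) := by
  rw [h x]
  apply le_antisymm
  · exact Set.sInter_subset_of_mem ⟨⟨μ x, rfl⟩, le_refl _⟩
  · rintro y hy s ⟨⟨p, rfl⟩, hx⟩
    exact le_trans hx hy

/-- Proposition (homom): if `μ a = μ b ⊔ μ c` then the canonical representation
satisfies `μ̂ a = μ̂ b ∩ μ̂ c` (the join in the cut lattice, ordered dually to
inclusion, is set intersection). -/
theorem stmt_9 {B L : Type*} [CompleteLattice L] (μ : B → L)
    (muhat : B → Set B)
    (h : ∀ x : B, muhat x = ⋂₀ {s : Set B | (∃ p : L, s = μ ⁻¹' Set.Ici p) ∧ x ∈ s})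
    (a b c : B) (hjoin : μ a = μ b ⊔ μ c) :
    muhat a = muhat b ∩ muhat c := by
  rw [muhat_eq μ muhat h, muhat_eq μ muhat h, muhat_eq μ muhat h]
  ext y
  simp [hjoin, sup_le_iff]
end

section
/- Every isotone Boolean function is a lattice induced threshold function: for every n and every monotone f : {0,1}ⁿ → {0,1}, there exist a complete lattice L and elements w₁, …, wₙ, t ∈ L such that for all (x₁,…,xₙ) ∈ {0,1}ⁿ, f(x₁,…,xₙ) = 1 if and only if ⋁_{i=1}^{n} (wᵢ·xᵢ) ≥ t. -/
/-- Theorem (thm1n): every isotone Boolean function is a lattice induced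
threshold function. -/
theorem stmt_11 {n : ℕ} (f : (Fin n → Bool) → Bool) (hf : Monotone f) :
    ∃ (L : Type) (_ : CompleteLattice L) (w : Fin n → L) (t : L),
      ∀ x : Fin n → Bool,
        f x = true ↔ t ≤ ⨆ i : Fin n, (if x i then w i else ⊥) := by
  refine ⟨(Set (Fin n → Bool))ᵒᵈ, inferInstance,
    fun i => OrderDual.toDual {y | y i = true},
    OrderDual.toDual {y | f y = true}, fun x => ?_⟩
  have hrw : (⨆ i : Fin n, (if x i then OrderDual.toDual {y : Fin n → Bool | y i = true} else ⊥))
      = OrderDual.toDual (⨅ i : Fin n, (if x i then {y : Fin n → Bool | y i = true} else ⊤)) := by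
    rw [toDual_iInf]
    congr 1
  rw [hrw, OrderDual.toDual_le_toDual]
  constructor
  · intro hfx y hy
    simp only [Set.iInf_eq_iInter, Set.mem_iInter] at hy
    have hxy : x ≤ y := by
      intro i
      have := hy i
      by_cases h : x i
      · simp [h] at this
        simp [h, this]
      · simp [h]
    have := hf hxy
    rw [hfx] at this
    exact le_antisymm (Bool.le_true _) this
  · intro h
    have hx : x ∈ ⨅ i : Fin n, (if x i then {y : Fin n → Bool | y i = true} else ⊤) := by
      simp only [Set.iInf_eq_iInter, Set.mem_iInter]
      intro i
      by_cases hi : x i <;> simp [hi]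
    exact h hx
end

section
/- For every n there exist a complete lattice L and elements w₁, …, wₙ ∈ L (depending only on n) such that every up-set F of the Boolean lattice {0,1}ⁿ is a cut of the map β̄(x₁,…,xₙ) = ⋁_{i=1}^{n} (wᵢ·xᵢ): that is, for every upper set F ⊆ {0,1}ⁿ there exists t ∈ L with F = {x ∈ {0,1}ⁿ : ⋁_{i=1}^{n} (wᵢ·xᵢ) ≥ t}. -/
/-- Theorem (main): every up-set of the finite Boolean lattice `{0,1}ⁿ` is a cut
of the function `β̄(x) = ⋁ᵢ wᵢ·xᵢ` (for suitable `L` and `w` depending only on `n`). -/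
theorem stmt_12 (n : ℕ) :
    ∃ (L : Type) (_ : CompleteLattice L) (w : Fin n → L),
      ∀ F : Set (Fin n → Bool), IsUpperSet F →
        ∃ t : L, F = {x : Fin n → Bool | t ≤ ⨆ i : Fin n, (if x i then w i else ⊥)} := by
  refine ⟨Set (Fin n → Bool), inferInstance, fun i => {y | y i = true}, ?_⟩
  intro F hF
  refine ⟨{y | (fun i => !(y i)) ∉ F}, ?_⟩
  ext x
  simp only [Set.mem_setOf_eq, Set.le_iff_subset, Set.subset_def, Set.mem_iUnion,
    Set.iSup_eq_iUnion]
  constructor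
  · intro hx y hy
    by_contra h
    push_neg at h
    apply hy
    apply hF _ hx
    intro i
    have := h i
    cases hxi : x i with
    | false => simp [hxi]
    | true =>
      simp only [hxi, if_true] at this
      simp only [Set.mem_setOf_eq] at this
      cases hyi : y i with
      | false => simp [hyi]
      | true => exact absurd hyi this
  · intro h
    by_contra hx
    obtain ⟨i, hi⟩ := h (fun i => !(x i)) (by simpa using hx)
    cases hxi : x i with
    | false => simp [hxi] at hi
    | true => simp [hxi] at hi
end

section
/- For every n there exist a complete lattice L and elements w₁, …, wₙ ∈ L such that the map β̄ : {0,1}ⁿ → L, β̄(x₁,…,xₙ) = ⋁_{i=1}^{n} (wᵢ·xᵢ), is monotone (an L-valued up-set), and for every complete lattice L′ and every monotone μ : {0,1}ⁿ → L′, every cut of μ is a cut of β̄: for every p ∈ L′ there is t ∈ L with μ⁻¹(↑p) = β̄⁻¹(↑t). -/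
/-- Corollary: `β̄` is a lattice valued up-set on `{0,1}ⁿ` and the cuts of every
lattice valued up-set on `{0,1}ⁿ` are among the cuts of `β̄`. -/
theorem stmt_13 (n : ℕ) :
    ∃ (L : Type) (_ : CompleteLattice L) (w : Fin n → L),
      Monotone (fun x : Fin n → Bool => ⨆ i : Fin n, (if x i then w i else ⊥)) ∧
      ∀ (L' : Type) [CompleteLattice L'], ∀ (μ : (Fin n → Bool) → L'),
        Monotone μ → ∀ p : L', ∃ t : L,
          μ ⁻¹' Set.Ici p =
            (fun x : Fin n → Bool => ⨆ i : Fin n, (if x i then w i else ⊥)) ⁻¹' Set.Ici t := by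
  have key : ∀ x : Fin n → Bool,
      (⨆ i : Fin n, (if x i then OrderDual.toDual {y : Fin n → Bool | y i = true} else ⊥))
        = OrderDual.toDual {y | x ≤ y} := by
    intro x
    apply OrderDual.ofDual.injective
    rw [ofDual_iSup]
    ext y
    simp only [Set.iInf_eq_iInter, Set.mem_iInter, OrderDual.ofDual_toDual, Set.mem_setOf_eq]
    constructor
    · intro h i
      by_cases hx : x i
      · have := h i
        rw [if_pos hx] at this
        have hyi : y i = true := this
        simp [hx, hyi]
      · simp [hx]
    · intro h i
      by_cases hx : x i
      · rw [if_pos hx]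
        have := h i
        rw [hx] at this
        have : y i = true := top_le_iff.mp this
        exact this
      · rw [if_neg hx]
        trivial
  refine ⟨(Set (Fin n → Bool))ᵒᵈ, inferInstance,
    fun i => OrderDual.toDual {y | y i = true}, ?_, ?_⟩
  · intro a b hab
    simp only [key]
    intro y hy
    exact le_trans hab hy
  · intro L' _ μ hμ p
    refine ⟨OrderDual.toDual (μ ⁻¹' Set.Ici p), ?_⟩
    ext x
    simp only [Set.mem_preimage, Set.mem_Ici, key]
    constructor
    · intro h y hy
      exact le_trans h (hμ hy)
    · intro h
      exact h (le_refl x)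
end

section
/- Let B = {0,1}² and let F be the closure system of up-sets F = { {(1,1)}, {(1,1),(1,0)}, {(1,1),(1,0),(0,1)}, {(1,1),(1,0),(0,1),(0,0)} }. Then there is no complete lattice L and no elements w₁, w₂ ∈ L such that the collection of all cuts of the map ν(x₁,x₂) = (w₁·x₁) ∨ (w₂·x₂) equals F; that is, { ν⁻¹(↑p) : p ∈ L } ≠ F for every choice of L, w₁, w₂. -/
/-- Example 1 (ex2): the closure system
`F = {{(1,1)}, {(1,1),(1,0)}, {(1,1),(1,0),(0,1)}, {(1,1),(1,0),(0,1),(0,0)}}`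
of up-sets of `{0,1}²` is not the collection of cuts of any linear combination
`ν(x₁,x₂) = (w₁·x₁) ∨ (w₂·x₂)` over any complete lattice `L`. -/
theorem stmt_15 :
    ¬ ∃ (L : Type) (_ : CompleteLattice L) (w₁ w₂ : L),
      {s : Set (Bool × Bool) | ∃ p : L,
          s = {x : Bool × Bool | p ≤ (if x.1 then w₁ else ⊥) ⊔ (if x.2 then w₂ else ⊥)}} =
        ({ {(true, true)},
           {(true, true), (true, false)},
           {(true, true), (true, false), (false, true)},
           {(true, true), (true, false), (false, true), (false, false)} } :
          Set (Set (Bool × Bool))) := by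
  rintro ⟨L, _, w₁, w₂, h⟩
  have hm := Set.ext_iff.mp h
  obtain ⟨s, hs⟩ : ∃ p : L, ({(true, true)} : Set (Bool × Bool)) =
      {x : Bool × Bool | p ≤ (if x.1 then w₁ else ⊥) ⊔ (if x.2 then w₂ else ⊥)} :=
    (hm {(true, true)}).mpr (by left; rfl)
  have hstt : s ≤ w₁ ⊔ w₂ := by
    have h1 : (true, true) ∈ ({(true, true)} : Set (Bool × Bool)) := rfl
    rw [hs] at h1
    simpa using h1
  have hstf : ¬ s ≤ w₁ := by
    intro hle
    have h1 : (true, false) ∈ {x : Bool × Bool |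
        s ≤ (if x.1 then w₁ else ⊥) ⊔ (if x.2 then w₂ else ⊥)} := by simpa using hle
    rw [← hs] at h1
    simp at h1
  by_cases hw : w₂ ≤ w₁
  · exact hstf (hstt.trans (sup_le le_rfl hw))
  · have hT := (hm {x : Bool × Bool |
        w₂ ≤ (if x.1 then w₁ else ⊥) ⊔ (if x.2 then w₂ else ⊥)}).mp ⟨w₂, rfl⟩
    have hft : (false, true) ∈ {x : Bool × Bool |
        w₂ ≤ (if x.1 then w₁ else ⊥) ⊔ (if x.2 then w₂ else ⊥)} := by simp
    have htf : (true, false) ∉ {x : Bool × Bool |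
        w₂ ≤ (if x.1 then w₁ else ⊥) ⊔ (if x.2 then w₂ else ⊥)} := by simpa using hw
    simp only [Set.mem_insert_iff, Set.mem_singleton_iff] at hT
    clear hs hm h hstt hstf
    rcases hT with h' | h' | h' | h' <;> rw [h'] at hft htf <;> simp_all
end

section
/- Let F be a closure system on B = {0,1}ⁿ consisting of upper sets, and for x ∈ B write x̄ = ⋂{f ∈ F : x ∈ f}. Suppose there exist a complete lattice L and w₁,…,wₙ ∈ L such that F equals the collection of all cuts of the map ν(x₁,…,xₙ) = ⋁_{i=1}^{n} (wᵢ·xᵢ), i.e., F = { ν⁻¹(↑p) : p ∈ L }. Then for all x, y ∈ B: if x̄ ⊆ ȳ then (x ∨ y)‾ = x̄. -/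
/-- Proposition (nec): if a closure system `F` of up-sets of `{0,1}ⁿ` is the
family of cuts of a linear combination, then `x̄ ⊆ ȳ` implies `(x ∨ y)‾ = x̄`. -/
theorem stmt_17 {n : ℕ} (F : Set (Set (Fin n → Bool)))
    (hup : ∀ f ∈ F, IsUpperSet f)
    (huniv : Set.univ ∈ F) (hinter : ∀ S ⊆ F, ⋂₀ S ∈ F)
    (L : Type*) [CompleteLattice L] (w : Fin n → L)
    (hF : F = {s : Set (Fin n → Bool) | ∃ p : L,
        s = {x : Fin n → Bool | p ≤ ⨆ i : Fin n, (if x i then w i else ⊥)}})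
    (x y : Fin n → Bool)
    (hxy : ⋂₀ {f | f ∈ F ∧ x ∈ f} ⊆ ⋂₀ {f | f ∈ F ∧ y ∈ f}) :
    ⋂₀ {f | f ∈ F ∧ x ⊔ y ∈ f} = ⋂₀ {f | f ∈ F ∧ x ∈ f} := by
  set ν : (Fin n → Bool) → L := fun z => ⨆ i : Fin n, (if z i then w i else ⊥) with hν
  have key : ∀ z : Fin n → Bool,
      ⋂₀ {f | f ∈ F ∧ z ∈ f} = {u : Fin n → Bool | ν z ≤ ν u} := by
    intro z
    ext u
    simp only [Set.mem_sInter, Set.mem_setOf_eq]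
    constructor
    · intro h
      have := h {v : Fin n → Bool | ν z ≤ ν v} ⟨by rw [hF]; exact ⟨ν z, rfl⟩, le_refl _⟩
      exact this
    · intro h f hf
      obtain ⟨⟨p, rfl⟩, hz⟩ := by rw [hF] at hf; exact hf
      exact le_trans hz h
  have hsup : ν (x ⊔ y) = ν x ⊔ ν y := by
    rw [hν]
    simp only
    rw [iSup_sup_eq.symm]
    congr 1
    funext i
    have : (x ⊔ y) i = (x i || y i) := rfl
    rw [this]
    cases x i <;> cases y i <;> simp
  have hyx : ν y ≤ ν x := by
    have hx : x ∈ ⋂₀ {f | f ∈ F ∧ x ∈ f} := by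
      rw [key]; exact le_refl _
    have := hxy hx
    rw [key] at this
    exact this
  rw [key, key, hsup, sup_eq_left.mpr hyx]
end

section
/- Let F be a closure system on B = {0,1}ⁿ consisting of upper sets, and for x ∈ B write x̄ = ⋂{f ∈ F : x ∈ f}. The following three conditions are equivalent: (i) for all x, y ∈ B, x̄ ⊆ ȳ implies (x ∨ y)‾ = x̄; (ii) for all x, y ∈ B, (x ∨ y)‾ = x̄ ∩ ȳ; (iii) there exist a complete lattice L and w₁,…,wₙ ∈ L such that F equals the collection of all cuts of the map ν(x₁,…,xₙ) = ⋁_{i=1}^{n} (wᵢ·xᵢ), i.e., F = { ν⁻¹(↑p) : p ∈ L }. -/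
/-- Theorem: for a closure system `F` of up-sets of `{0,1}ⁿ` with
`x̄ = ⋂{f ∈ F : x ∈ f}`, the following are equivalent:
(i) `x̄ ⊆ ȳ → (x ∨ y)‾ = x̄`; (ii) `(x ∨ y)‾ = x̄ ∩ ȳ`;
(iii) `F` is the family of cuts of a linear combination over some complete lattice. -/
theorem stmt_18 {n : ℕ} (F : Set (Set (Fin n → Bool)))
    (hup : ∀ f ∈ F, IsUpperSet f)
    (huniv : Set.univ ∈ F) (hinter : ∀ S ⊆ F, ⋂₀ S ∈ F)
    (bar : (Fin n → Bool) → Set (Fin n → Bool))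
    (hbar : ∀ x : Fin n → Bool, bar x = ⋂₀ {f | f ∈ F ∧ x ∈ f}) :
    ((∀ x y : Fin n → Bool, bar x ⊆ bar y → bar (x ⊔ y) = bar x) ↔
      (∀ x y : Fin n → Bool, bar (x ⊔ y) = bar x ∩ bar y)) ∧
    ((∀ x y : Fin n → Bool, bar (x ⊔ y) = bar x ∩ bar y) ↔
      ∃ (L : Type) (_ : CompleteLattice L) (w : Fin n → L),
        F = {s : Set (Fin n → Bool) | ∃ p : L,
          s = {x : Fin n → Bool | p ≤ ⨆ i : Fin n, (if x i then w i else ⊥)}}) := by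
  classical
  -- basic facts about `bar`
  have hbarF : ∀ x, bar x ∈ F := by
    intro x; rw [hbar]; exact hinter _ (fun f hf => hf.1)
  have hmem : ∀ x, x ∈ bar x := by
    intro x; rw [hbar]; intro f hf; exact hf.2
  have hmin : ∀ x f, f ∈ F → x ∈ f → bar x ⊆ f := by
    intro x f hf hx; rw [hbar]; exact Set.sInter_subset_of_mem ⟨hf, hx⟩
  have hsub : ∀ x y, y ∈ bar x → bar y ⊆ bar x := fun x y h => hmin y _ (hbarF x) h
  have hbup : ∀ x, IsUpperSet (bar x) := by
    intro x; rw [hbar]; exact isUpperSet_sInter (fun f hf => hup f hf.1)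
  have hmono : ∀ x y : Fin n → Bool, x ≤ y → bar y ⊆ bar x :=
    fun x y h => hsub x y (hbup x h (hmem x))
  have hiff : ∀ x f, f ∈ F → (x ∈ f ↔ bar x ⊆ f) :=
    fun x f hf => ⟨hmin x f hf, fun h => h (hmem x)⟩
  constructor
  · constructor
    · -- (i) → (ii)
      intro h1 x y
      apply Set.Subset.antisymm
      · exact Set.subset_inter (hmono x _ le_sup_left) (hmono y _ le_sup_right)
      · intro z hz
        have hzx : bar z ⊆ bar x := hsub x z hz.1
        have hzy : bar z ⊆ bar y := hsub y z hz.2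
        have e1 : bar (z ⊔ x) = bar z := h1 z x hzx
        have e2 : bar (z ⊔ x ⊔ y) = bar (z ⊔ x) := h1 (z ⊔ x) y (e1 ▸ hzy)
        have hle : x ⊔ y ≤ z ⊔ x ⊔ y := sup_le (le_sup_of_le_left le_sup_right) le_sup_right
        have : bar (z ⊔ x ⊔ y) ⊆ bar (x ⊔ y) := hmono _ _ hle
        exact this (by rw [e2, e1]; exact hmem z)
    · -- (ii) → (i)
      intro h2 x y hxy
      rw [h2]; exact Set.inter_eq_self_of_subset_left hxy
  · constructor
    · -- (ii) → (iii)
      intro h2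
      -- elementary vectors
      set e : Fin n → (Fin n → Bool) := fun i j => decide (j = i) with he
      -- bar of bottom is univ
      have hbot : bar (fun _ => false) = Set.univ := by
        apply Set.eq_univ_of_forall
        intro z
        exact hbup _ (fun j => Bool.false_le (z j)) (hmem _)
      -- bar of a finset-indicator decomposes
      have hfin : ∀ s : Finset (Fin n),
          bar (fun j => decide (j ∈ s)) = ⋂ i ∈ s, bar (e i) := by
        intro s
        induction s using Finset.induction_on with
        | empty => simpa using hbot
        | @insert i s hi ih =>
          have hx : (fun j => decide (j ∈ insert i s)) = e i ⊔ (fun j => decide (j ∈ s)) := by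
            funext j
            simp only [he, Pi.sup_apply, Finset.mem_insert]
            by_cases h1 : j = i <;> by_cases h2 : j ∈ s <;> simp [h1, h2]
          rw [hx, h2, ih, Finset.set_biInter_insert]
      have hkey : ∀ x : Fin n → Bool,
          bar x = ⋂ i, (if x i then bar (e i) else Set.univ) := by
        intro x
        have hx : x = fun j => decide (j ∈ Finset.univ.filter (fun i => x i = true)) := by
          funext j
          by_cases h : x j = true <;> simp [h]
        rw [hx, hfin]
        ext z
        simp only [Set.mem_iInter, Finset.mem_filter, Finset.mem_univ, true_and,
          Set.mem_ite_univ_right, decide_eq_true_eq]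
      -- the complete lattice: closed sets, reversely ordered
      letI instInf : InfSet {f : Set (Fin n → Bool) // f ∈ F} :=
        ⟨fun S => ⟨⋂₀ (Subtype.val '' S), hinter _ (by rintro _ ⟨f, _, rfl⟩; exact f.2)⟩⟩
      letI instK : CompleteLattice {f : Set (Fin n → Bool) // f ∈ F} :=
        completeLatticeOfInf _ (by
          intro S
          constructor
          · intro f hf
            exact Set.sInter_subset_of_mem ⟨f, hf, rfl⟩
          · intro g hg
            refine Set.subset_sInter ?_
            rintro _ ⟨f, hf, rfl⟩
            exact hg hf)
      refine ⟨({f : Set (Fin n → Bool) // f ∈ F})ᵒᵈ, inferInstance,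
        fun i => OrderDual.toDual ⟨bar (e i), hbarF _⟩, ?_⟩
      -- compute the value of ν x
      have hvalInf : ∀ u : Fin n → {f : Set (Fin n → Bool) // f ∈ F},
          ((⨅ i, u i).val : Set (Fin n → Bool)) = ⋂ i, (u i).val := by
        intro u
        show ⋂₀ (Subtype.val '' Set.range u) = _
        rw [Set.sInter_image, Set.biInter_range]
      have hvalTop : ((⊤ : {f : Set (Fin n → Bool) // f ∈ F}).val) = Set.univ := by
        show ⋂₀ (Subtype.val '' (∅ : Set {f : Set (Fin n → Bool) // f ∈ F})) = Set.univ
        simp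
      have hval : ∀ x : Fin n → Bool,
          (OrderDual.ofDual (⨆ i : Fin n,
            (if x i then OrderDual.toDual (⟨bar (e i), hbarF _⟩ :
              {f : Set (Fin n → Bool) // f ∈ F}) else ⊥))).val = bar x := by
        intro x
        have h1 : OrderDual.ofDual (⨆ i : Fin n,
            (if x i then OrderDual.toDual (⟨bar (e i), hbarF _⟩ :
              {f : Set (Fin n → Bool) // f ∈ F}) else ⊥))
            = ⨅ i : Fin n, (if x i then (⟨bar (e i), hbarF _⟩ :
              {f : Set (Fin n → Bool) // f ∈ F}) else ⊤) := by
          rw [ofDual_iSup]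
          exact iInf_congr (fun i => by by_cases h : x i <;> simp [h])
        rw [h1, hvalInf, hkey]
        exact Set.iInter_congr (fun i => by by_cases h : x i <;> simp [h, hvalTop])
      -- the family of cuts equals F
      ext s
      simp only [Set.mem_setOf_eq]
      constructor
      · intro hs
        refine ⟨OrderDual.toDual ⟨s, hs⟩, ?_⟩
        ext x
        simp only [Set.mem_setOf_eq]
        rw [OrderDual.toDual_le, hiff x s hs]
        constructor
        · intro h
          rw [← hval x] at h
          exact h
        · intro h
          rw [← hval x]
          exact h
      · rintro ⟨p, rfl⟩
        have : {x : Fin n → Bool | p ≤ ⨆ i : Fin n,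
            (if x i then OrderDual.toDual (⟨bar (e i), hbarF _⟩ :
              {f : Set (Fin n → Bool) // f ∈ F}) else ⊥)} = (OrderDual.ofDual p).val := by
          ext x
          simp only [Set.mem_setOf_eq]
          rw [← OrderDual.ofDual_le_ofDual]
          constructor
          · intro h
            have := Subtype.coe_le_coe.mpr h
            rw [hval x] at this
            exact this (hmem x)
          · intro h
            have : bar x ⊆ (OrderDual.ofDual p).val := hmin x _ (OrderDual.ofDual p).2 h
            rw [← hval x] at this
            exact this
        rw [this]
        exact (OrderDual.ofDual p).2
    · -- (iii) → (ii)
      rintro ⟨L, instL, w, hF⟩ x y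
      set ν : (Fin n → Bool) → L := fun z => ⨆ i : Fin n, (if z i then w i else ⊥) with hν
      have hsup : ∀ a b : Fin n → Bool, ν (a ⊔ b) = ν a ⊔ ν b := by
        intro a b
        rw [hν]
        simp only
        rw [← iSup_sup_eq]
        congr 1
        funext i
        have : (a ⊔ b) i = (a i || b i) := by
          cases ha : a i <;> cases hb : b i <;>
            simp [Pi.sup_apply, ha, hb]
        rw [this]
        cases ha : a i <;> cases hb : b i <;> simp [ha, hb]
      have hbar2 : ∀ z : Fin n → Bool, bar z = {u | ν z ≤ ν u} := by
        intro z
        rw [hbar]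
        apply Set.Subset.antisymm
        · exact Set.sInter_subset_of_mem ⟨by rw [hF]; exact ⟨ν z, rfl⟩, le_refl _⟩
        · refine Set.subset_sInter ?_
          rintro f ⟨hfF, hzf⟩
          rw [hF] at hfF
          obtain ⟨p, rfl⟩ := hfF
          intro u hu
          exact le_trans hzf hu
      ext z
      simp [hbar2, hsup, sup_le_iff]
end

section
/- Let L be a complete lattice and μ : {0,1}ⁿ → L a monotone map (an L-valued up-set on B = {0,1}ⁿ), and for x ∈ B write x̄ = ⋂{μ_p : p ∈ L, x ∈ μ_p} where μ_p = μ⁻¹(↑p). Then there exist a complete lattice L₁ and w₁,…,wₙ ∈ L₁ such that the map ν(x₁,…,xₙ) = ⋁_{i=1}^{n} (wᵢ·xᵢ) has the same collection of cuts as μ, i.e., { ν⁻¹(↑q) : q ∈ L₁ } = { μ⁻¹(↑p) : p ∈ L }, if and only if for all x, y ∈ B, (x ∨ y)‾ = x̄ ∩ ȳ. -/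
namespace Stmt19Aux

variable {L : Type*} [CompleteLattice L] {n : ℕ}

abbrev CutT (μ : (Fin n → Bool) → L) : Type :=
  {s : Set (Fin n → Bool) // ∃ p : L, s = μ ⁻¹' Set.Ici p}

def cInf (μ : (Fin n → Bool) → L) (S : Set (CutT μ)) : CutT μ :=
  ⟨μ ⁻¹' Set.Ici (sSup {p : L | μ ⁻¹' Set.Ici p ∈ Subtype.val '' S}), _, rfl⟩

lemma cInf_isGLB (μ : (Fin n → Bool) → L) (S : Set (CutT μ)) : IsGLB S (cInf μ S) := by
  constructor
  · intro t ht
    obtain ⟨p, hp⟩ := t.2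
    show (cInf μ S).1 ⊆ t.1
    intro x hx
    have hpP : p ∈ {p : L | μ ⁻¹' Set.Ici p ∈ Subtype.val '' S} := by
      show μ ⁻¹' Set.Ici p ∈ Subtype.val '' S
      exact ⟨t, ht, hp⟩
    have : p ≤ μ x := le_trans (le_sSup hpP) hx
    rw [hp]; exact this
  · intro b hb
    obtain ⟨pb, hpb⟩ := b.2
    show b.1 ⊆ (cInf μ S).1
    intro x hx
    show sSup _ ≤ μ x
    apply sSup_le
    intro p hp
    obtain ⟨t, htS, htv⟩ := hp
    have : b.1 ⊆ t.1 := hb htS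
    have hxt : x ∈ t.1 := this hx
    rw [htv] at hxt
    exact hxt

instance (μ : (Fin n → Bool) → L) : InfSet (CutT μ) := ⟨cInf μ⟩

noncomputable instance (μ : (Fin n → Bool) → L) : CompleteLattice (CutT μ) :=
  completeLatticeOfInf _ (cInf_isGLB μ)

lemma sInf_val (μ : (Fin n → Bool) → L) (S : Set (CutT μ)) :
    (sInf S).1 = ⋂₀ (Subtype.val '' S) := by
  have h : sInf S = cInf μ S := rfl
  rw [h]
  apply Set.Subset.antisymm
  · intro x hx
    intro s hs
    obtain ⟨t, htS, rfl⟩ := hs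
    obtain ⟨p, hp⟩ := t.2
    have := (cInf_isGLB μ S).1 htS
    exact this hx
  · intro x hx
    show sSup _ ≤ μ x
    apply sSup_le
    intro p hp
    obtain ⟨t, htS, htv⟩ := hp
    have : x ∈ t.1 := hx _ ⟨t, htS, rfl⟩
    rw [htv] at this
    exact this


lemma iInf_val (μ : (Fin n → Bool) → L) {ι : Sort*} (g : ι → CutT μ) :
    (⨅ i, g i).1 = ⋂ i, (g i).1 := by
  rw [iInf, sInf_val]
  ext x
  simp

lemma top_val (μ : (Fin n → Bool) → L) : (⊤ : CutT μ).1 = Set.univ := by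
  have h : (⊤ : CutT μ) = sInf ∅ := rfl
  rw [h, sInf_val]
  simp

lemma bigcap_eq (μ : (Fin n → Bool) → L) (x : Fin n → Bool) :
    ⋂₀ {s : Set (Fin n → Bool) | (∃ p : L, s = μ ⁻¹' Set.Ici p) ∧ x ∈ s} =
      μ ⁻¹' Set.Ici (μ x) := by
  ext y
  constructor
  · intro h
    exact h (μ ⁻¹' Set.Ici (μ x)) ⟨⟨μ x, rfl⟩, le_refl (μ x)⟩
  · intro h s hs
    obtain ⟨⟨p, rfl⟩, hx⟩ := hs
    exact le_trans hx h

def eb (i : Fin n) : Fin n → Bool := fun j => decide (j = i)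

lemma chi_filter (x : Fin n → Bool) :
    (fun j => decide (j ∈ Finset.filter (fun i => x i = true) Finset.univ)) = x := by
  funext j
  cases h : x j <;> simp [h]

lemma cut_finset (μ : (Fin n → Bool) → L) (hμ : Monotone μ)
    (H : ∀ x y : Fin n → Bool,
      μ ⁻¹' Set.Ici (μ (x ⊔ y)) = μ ⁻¹' Set.Ici (μ x) ∩ μ ⁻¹' Set.Ici (μ y))
    (s : Finset (Fin n)) :
    μ ⁻¹' Set.Ici (μ (fun j => decide (j ∈ s))) = ⋂ i ∈ s, μ ⁻¹' Set.Ici (μ (eb i)) := by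
  induction s using Finset.induction_on with
  | empty =>
    have h0 : (fun j : Fin n => decide (j ∈ (∅ : Finset (Fin n)))) = fun _ => false := by
      funext j; simp
    rw [h0]
    ext y
    simp only [Set.mem_preimage, Set.mem_Ici, Set.mem_iInter]
    constructor
    · intro _ i hi; simp at hi
    · intro _
      apply hμ
      intro j
      exact Bool.false_le _
  | @insert a s ha ih =>
    have h1 : (fun j : Fin n => decide (j ∈ insert a s)) = eb a ⊔ (fun j => decide (j ∈ s)) := by
      funext j
      simp only [eb, Pi.sup_apply, Finset.mem_insert]
      by_cases h : j = a <;> simp [h]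
    rw [h1, H, ih]
    ext y
    simp [Finset.mem_insert]


lemma cut_eq_iInter (μ : (Fin n → Bool) → L) (hμ : Monotone μ)
    (H : ∀ x y : Fin n → Bool,
      μ ⁻¹' Set.Ici (μ (x ⊔ y)) = μ ⁻¹' Set.Ici (μ x) ∩ μ ⁻¹' Set.Ici (μ y))
    (x : Fin n → Bool) :
    μ ⁻¹' Set.Ici (μ x) = ⋂ i, (if x i then μ ⁻¹' Set.Ici (μ (eb i)) else Set.univ) := by
  have h := cut_finset μ hμ H (Finset.filter (fun i => x i = true) Finset.univ)
  rw [chi_filter] at h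
  rw [h]
  ext y
  simp only [Set.mem_iInter, Finset.mem_filter, Finset.mem_univ, true_and]
  constructor
  · intro h i
    by_cases hx : x i = true
    · rw [if_pos hx]; exact h i hx
    · rw [if_neg hx]; trivial
  · intro h i hi
    have := h i
    rwa [if_pos hi] at this

lemma ofDual_iSup' {T : Type*} [CompleteLattice T] {ι : Sort*} (f : ι → Tᵒᵈ) :
    OrderDual.ofDual (⨆ i, f i) = ⨅ i, OrderDual.ofDual (f i) := rfl

lemma fixed_cut (μ : (Fin n → Bool) → L) (p : L) :
    {x : Fin n → Bool | μ ⁻¹' Set.Ici (μ x) ⊆ μ ⁻¹' Set.Ici p} = μ ⁻¹' Set.Ici p := by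
  ext x
  constructor
  · intro h
    exact h (le_refl (μ x))
  · intro h y hy
    exact le_trans h hy

end Stmt19Aux




/-- Corollary: a lattice valued up-set `μ` on `{0,1}ⁿ` has the same collection
of cuts as some linear combination `ν(x) = ⋁ᵢ wᵢ·xᵢ` over some complete lattice
`L₁` iff `(x ∨ y)‾ = x̄ ∩ ȳ` for all `x, y`, where `x̄` is defined by the cuts of `μ`. -/
theorem stmt_19 {L : Type*} [CompleteLattice L] {n : ℕ}
    (μ : (Fin n → Bool) → L) (hμ : Monotone μ)
    (bar : (Fin n → Bool) → Set (Fin n → Bool))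
    (hbar : ∀ x : Fin n → Bool,
      bar x = ⋂₀ {s : Set (Fin n → Bool) | (∃ p : L, s = μ ⁻¹' Set.Ici p) ∧ x ∈ s}) :
    (∃ (L₁ : Type) (_ : CompleteLattice L₁) (w : Fin n → L₁),
        {s : Set (Fin n → Bool) | ∃ q : L₁,
            s = {x : Fin n → Bool | q ≤ ⨆ i : Fin n, (if x i then w i else ⊥)}} =
          {s : Set (Fin n → Bool) | ∃ p : L, s = μ ⁻¹' Set.Ici p}) ↔
      ∀ x y : Fin n → Bool, bar (x ⊔ y) = bar x ∩ bar y := by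
  classical
  have hbar' : ∀ x, bar x = μ ⁻¹' Set.Ici (μ x) := fun x =>
    (hbar x).trans (Stmt19Aux.bigcap_eq μ x)
  constructor
  · rintro ⟨L₁, _inst, w, hcuts⟩ x y
    set ν : (Fin n → Bool) → L₁ := fun z => ⨆ i, (if z i then w i else ⊥) with hν
    have hsup : ∀ a b : Fin n → Bool, ν (a ⊔ b) = ν a ⊔ ν b := by
      intro a b
      have h1 : ∀ i, (if (a ⊔ b) i then w i else ⊥) =
          (if a i then w i else ⊥) ⊔ (if b i then w i else (⊥ : L₁)) := by
        intro i
        have hab : (a ⊔ b) i = (a i || b i) := rfl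
        rw [hab]
        cases a i <;> cases b i <;> simp
      calc ν (a ⊔ b) = ⨆ i, ((if a i then w i else ⊥) ⊔ (if b i then w i else ⊥)) :=
            iSup_congr h1
        _ = ν a ⊔ ν b := iSup_sup_eq
    have hbarν : ∀ z, bar z = {u | ν z ≤ ν u} := by
      intro z
      rw [hbar z]
      apply Set.Subset.antisymm
      · intro u h
        have hmem : {x | ν z ≤ ν x} ∈ {s : Set (Fin n → Bool) | ∃ p : L, s = μ ⁻¹' Set.Ici p} := by
          rw [← hcuts]; exact ⟨ν z, rfl⟩
        exact h _ ⟨hmem, le_refl (ν z)⟩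
      · intro u h s hs
        obtain ⟨hs1, hz⟩ := hs
        have hs2 : s ∈ {s : Set (Fin n → Bool) | ∃ q : L₁,
            s = {x : Fin n → Bool | q ≤ ν x}} := by rw [hcuts]; exact hs1
        obtain ⟨q, rfl⟩ := hs2
        exact le_trans hz h
    rw [hbarν (x ⊔ y), hbarν x, hbarν y, hsup]
    ext u
    simp only [Set.mem_setOf_eq, Set.mem_inter_iff, sup_le_iff]
  · intro Hbar
    have H : ∀ x y : Fin n → Bool,
        μ ⁻¹' Set.Ici (μ (x ⊔ y)) = μ ⁻¹' Set.Ici (μ x) ∩ μ ⁻¹' Set.Ici (μ y) := by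
      intro x y
      rw [← hbar' (x ⊔ y), ← hbar' x, ← hbar' y]
      exact Hbar x y
    refine ⟨(Stmt19Aux.CutT μ)ᵒᵈ, inferInstance,
      fun i => OrderDual.toDual
        (⟨μ ⁻¹' Set.Ici (μ (Stmt19Aux.eb i)), μ (Stmt19Aux.eb i), rfl⟩ : Stmt19Aux.CutT μ), ?_⟩
    have hnu : ∀ x : Fin n → Bool,
        (⨆ i, (if x i then OrderDual.toDual
            (⟨μ ⁻¹' Set.Ici (μ (Stmt19Aux.eb i)), μ (Stmt19Aux.eb i), rfl⟩ : Stmt19Aux.CutT μ)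
          else ⊥)) =
        OrderDual.toDual (⟨μ ⁻¹' Set.Ici (μ x), μ x, rfl⟩ : Stmt19Aux.CutT μ) := by
      intro x
      apply OrderDual.ofDual.injective
      rw [Stmt19Aux.ofDual_iSup']
      apply Subtype.ext
      rw [Stmt19Aux.iInf_val]
      rw [OrderDual.ofDual_toDual]
      have hpt : ∀ i : Fin n,
          (OrderDual.ofDual (if x i = true then OrderDual.toDual
              (⟨μ ⁻¹' Set.Ici (μ (Stmt19Aux.eb i)), μ (Stmt19Aux.eb i), rfl⟩ : Stmt19Aux.CutT μ)
            else ⊥)).1 =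
          if x i = true then μ ⁻¹' Set.Ici (μ (Stmt19Aux.eb i)) else Set.univ := by
        intro i
        by_cases hx : x i = true
        · rw [if_pos hx, if_pos hx, OrderDual.ofDual_toDual]
        · rw [if_neg hx, if_neg hx]
          exact Stmt19Aux.top_val μ
      rw [Set.iInter_congr hpt]
      exact (Stmt19Aux.cut_eq_iInter μ hμ H x).symm
    ext s
    simp only [Set.mem_setOf_eq]
    constructor
    · rintro ⟨q, rfl⟩
      obtain ⟨p, hp⟩ := (OrderDual.ofDual q).2
      refine ⟨p, ?_⟩
      have hle : ∀ x : Fin n → Bool,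
          (q ≤ ⨆ i, (if x i then OrderDual.toDual
              (⟨μ ⁻¹' Set.Ici (μ (Stmt19Aux.eb i)), μ (Stmt19Aux.eb i), rfl⟩ : Stmt19Aux.CutT μ)
            else ⊥)) ↔ μ ⁻¹' Set.Ici (μ x) ⊆ (OrderDual.ofDual q).1 := by
        intro x
        rw [hnu x]
        exact Iff.rfl
      calc {x | q ≤ _} = {x | μ ⁻¹' Set.Ici (μ x) ⊆ (OrderDual.ofDual q).1} := by
            ext x; exact hle x
        _ = μ ⁻¹' Set.Ici p := by rw [hp]; exact Stmt19Aux.fixed_cut μ p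
    · rintro ⟨p, rfl⟩
      refine ⟨OrderDual.toDual (⟨μ ⁻¹' Set.Ici p, p, rfl⟩ : Stmt19Aux.CutT μ), ?_⟩
      ext x
      rw [Set.mem_setOf_eq, hnu x]
      constructor
      · intro hx y hy
        exact le_trans hx hy
      · intro h
        exact h (le_refl (μ x))
end
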